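/- arXiv:2408.12154 — 6 statements merged into one kernel-verified Lean document; each statement's English description precedes it below -/
import Mathlib

section
/- If D is a nonempty family of k-element subsets of {1,...,n} such that every t-element subset of {1,...,n} is contained in an even number of members of D, and if j < t is such that the binomial coefficient C(k-j, t-j) is odd, then every j-element subset of {1,...,n} is also contained in an even number of members of D. -/
/-- A binary `t`-design with block size `k` on point set `N`: a nonempty family of
`k`-element subsets of `N` such that every `t`-element subset of `N` is contained in an
even number of blocks. -/
def IsBinaryDesignOn (t : ℕ) (N : Finset ℕ) (k : ℕ) (D : Finset (Finset ℕ)) : Prop :=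
  D.Nonempty ∧ (∀ B ∈ D, B ⊆ N ∧ B.card = k) ∧
    ∀ S ⊆ N, S.card = t → Even ((D.filter fun B => S ⊆ B).card)

/-- A binary `t`-`(n,k)`-design on the point set `{1,…,n}`. -/
def IsBinaryDesign (t n k : ℕ) (D : Finset (Finset ℕ)) : Prop :=
  IsBinaryDesignOn t (Finset.Icc 1 n) k D

/-- `d_{t,n,k}`: minimum number of blocks of a binary `t`-`(n,k)`-design. -/
noncomputable def minBlocks (t n k : ℕ) : ℕ :=
  sInf {m | ∃ D : Finset (Finset ℕ), IsBinaryDesign t n k D ∧ D.card = m}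

lemma card_between {S B : Finset ℕ} (hSB : S ⊆ B) (t : ℕ) (ht : S.card ≤ t) :
    ((B.powersetCard t).filter (fun T => S ⊆ T)).card
      = Nat.choose (B.card - S.card) (t - S.card) := by
  rw [← Finset.card_sdiff_of_subset hSB, ← Finset.card_powersetCard]
  apply Finset.card_bij' (fun T _ => T \ S) (fun U _ => U ∪ S)
  · intro T hT
    simp only [Finset.mem_filter, Finset.mem_powersetCard] at hT ⊢
    obtain ⟨⟨hTB, hTc⟩, hST⟩ := hT
    refine ⟨Finset.sdiff_subset_sdiff hTB le_rfl, ?_⟩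
    rw [Finset.card_sdiff_of_subset hST, hTc]
  · intro U hU
    simp only [Finset.mem_filter, Finset.mem_powersetCard] at hU ⊢
    obtain ⟨hUB, hUc⟩ := hU
    have hdisj : Disjoint U S := Finset.sdiff_disjoint.mono_left hUB
    have hUB' : U ⊆ B := hUB.trans Finset.sdiff_subset
    refine ⟨⟨Finset.union_subset hUB' hSB, ?_⟩, Finset.subset_union_right⟩
    rw [Finset.card_union_of_disjoint hdisj, hUc]
    omega
  · intro T hT
    simp only [Finset.mem_filter] at hT
    exact Finset.sdiff_union_of_subset hT.2
  · intro U hU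
    simp only [Finset.mem_powersetCard] at hU
    have hdisj : Disjoint U S := Finset.sdiff_disjoint.mono_left hU.1
    rw [Finset.union_sdiff_right, Finset.sdiff_eq_self_of_disjoint hdisj]

theorem stmt0 (t n k j : ℕ) (D : Finset (Finset ℕ))
    (hD : IsBinaryDesign t n k D) (hjt : j < t)
    (hodd : Odd (Nat.choose (k - j) (t - j))) :
    ∀ S ⊆ Finset.Icc 1 n, S.card = j →
      Even ((D.filter fun B => S ⊆ B).card) := by
  intro S hSN hSj
  obtain ⟨hne, hblocks, hdes⟩ := hD
  set N := Finset.Icc 1 n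
  set 𝒯 := (N.powersetCard t).filter (fun T => S ⊆ T) with h𝒯
  have heven : Even (∑ T ∈ 𝒯, (D.filter fun B => T ⊆ B).card) := by
    apply Finset.even_sum
    intro T hT
    simp only [h𝒯, Finset.mem_filter, Finset.mem_powersetCard] at hT
    exact hdes T hT.1.1 hT.1.2
  have hswap : (∑ T ∈ 𝒯, (D.filter fun B => T ⊆ B).card)
      = ∑ B ∈ D, (𝒯.filter fun T => T ⊆ B).card := by
    simp only [Finset.card_filter]
    rw [Finset.sum_comm]
  have hcount : ∀ B ∈ D, (𝒯.filter fun T => T ⊆ B).card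
      = if S ⊆ B then Nat.choose (k - j) (t - j) else 0 := by
    intro B hB
    obtain ⟨hBN, hBk⟩ := hblocks B hB
    by_cases hSB : S ⊆ B
    · rw [if_pos hSB]
      have : 𝒯.filter (fun T => T ⊆ B) = (B.powersetCard t).filter (fun T => S ⊆ T) := by
        ext T
        simp only [h𝒯, Finset.mem_filter, Finset.mem_powersetCard]
        constructor
        · rintro ⟨⟨⟨_, hTc⟩, hST⟩, hTB⟩
          exact ⟨⟨hTB, hTc⟩, hST⟩
        · rintro ⟨⟨hTB, hTc⟩, hST⟩
          exact ⟨⟨⟨hTB.trans hBN, hTc⟩, hST⟩, hTB⟩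
      rw [this, card_between hSB t (by omega), hBk, hSj]
    · rw [if_neg hSB]
      rw [Finset.card_eq_zero, Finset.filter_eq_empty_iff]
      intro T hT hTB
      simp only [h𝒯, Finset.mem_filter] at hT
      exact hSB (hT.2.trans hTB)
  have hsum : (∑ B ∈ D, (𝒯.filter fun T => T ⊆ B).card)
      = (D.filter fun B => S ⊆ B).card * Nat.choose (k - j) (t - j) := by
    rw [Finset.sum_congr rfl hcount, ← Finset.sum_filter, Finset.sum_const, smul_eq_mul]
  rw [hswap, hsum, Nat.even_mul] at heven
  rcases heven with h | h
  · exact h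
  · exact absurd h (Nat.not_even_iff_odd.mpr hodd)
end

section
/- If k - j is even, then every binary j-(n,k)-design is also a binary (j-1)-(n,k)-design. -/
theorem stmt3 (j n k : ℕ) (hj : 1 ≤ j) (hjk : j ≤ k) (hpar : Even (k - j))
    (D : Finset (Finset ℕ)) (hD : IsBinaryDesign j n k D) :
    IsBinaryDesign (j - 1) n k D := by
  obtain ⟨hne, hblocks, heven⟩ := hD
  refine ⟨hne, hblocks, ?_⟩
  intro S hS hScard
  set N := Finset.Icc 1 n with hN
  set F := D.filter (fun B => S ⊆ B) with hF
  -- each block in F contains S and is a k-subset of N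
  have hFmem : ∀ B ∈ F, S ⊆ B ∧ B ⊆ N ∧ B.card = k := by
    intro B hB
    rw [hF, Finset.mem_filter] at hB
    exact ⟨hB.2, (hblocks B hB.1).1, (hblocks B hB.1).2⟩
  -- double counting
  have key : ∑ B ∈ F, (B \ S).card = ∑ x ∈ N \ S, (F.filter (fun B => x ∈ B)).card := by
    have h1 : ∀ B ∈ F, (B \ S).card = ∑ x ∈ N \ S, if x ∈ B then 1 else 0 := by
      intro B hB
      have hset : B \ S = (N \ S).filter (fun x => x ∈ B) := by
        ext x
        simp only [Finset.mem_sdiff, Finset.mem_filter]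
        constructor
        · intro ⟨hxB, hxS⟩
          exact ⟨⟨(hFmem B hB).2.1 hxB, hxS⟩, hxB⟩
        · intro ⟨⟨_, hxS⟩, hxB⟩
          exact ⟨hxB, hxS⟩
      rw [hset, Finset.card_filter]
    rw [Finset.sum_congr rfl h1, Finset.sum_comm]
    apply Finset.sum_congr rfl
    intro x _
    rw [Finset.card_filter]
  -- RHS is even
  have hrhs : Even (∑ x ∈ N \ S, (F.filter (fun B => x ∈ B)).card) := by
    apply Finset.even_sum
    intro x hx
    rw [Finset.mem_sdiff] at hx
    have hfilt : F.filter (fun B => x ∈ B) = D.filter (fun B => insert x S ⊆ B) := by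
      rw [hF, Finset.filter_filter]
      apply Finset.filter_congr
      intro B _
      simp only [Finset.insert_subset_iff]
      tauto
    rw [hfilt]
    apply heven
    · rw [Finset.insert_subset_iff]; exact ⟨hx.1, hS⟩
    · rw [Finset.card_insert_of_notMem hx.2, hScard]
      omega
  -- LHS equals F.card * (k - j + 1)
  have hlhs : ∑ B ∈ F, (B \ S).card = F.card * (k - j + 1) := by
    rw [Finset.sum_congr rfl (fun B hB => ?_), Finset.sum_const, smul_eq_mul]
    rw [Finset.card_sdiff_of_subset (hFmem B hB).1, (hFmem B hB).2.2, hScard]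
    omega
  rw [hlhs] at key
  rw [← key] at hrhs
  rcases Nat.even_mul.mp hrhs with h | h
  · exact h
  · exfalso
    simp [Nat.even_add_one, hpar] at h
end

section
/- Let D be a binary t-(n,k)-design on point set {1,...,n}. Define D⁺ = {B ∪ {n+1} : B ∈ D} ∪ {B ∪ {n+2} : B ∈ D} on point set {1,...,n+2}. Then D⁺ is a binary (t+1)-(n+2, k+1)-design with 2|D| blocks. -/
theorem stmt5 (t n k : ℕ) (D : Finset (Finset ℕ))
    (hD : IsBinaryDesign t n k D) :
    IsBinaryDesign (t + 1) (n + 2) (k + 1)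
        ((D.image fun B => insert (n + 1) B) ∪ (D.image fun B => insert (n + 2) B)) ∧
      ((D.image fun B => insert (n + 1) B) ∪
          (D.image fun B => insert (n + 2) B)).card = 2 * D.card := by
  obtain ⟨hne, hblocks, heven⟩ := hD
  have hmem : ∀ a, n < a → ∀ B ∈ D, a ∉ B := by
    intro a ha B hB hc
    have := (hblocks B hB).1 hc
    simp only [Finset.mem_Icc] at this; omega
  have h1 : ∀ B ∈ D, n + 1 ∉ B := hmem _ (by omega)
  have h2 : ∀ B ∈ D, n + 2 ∉ B := hmem _ (by omega)
  have hinj : ∀ a, (∀ B ∈ D, a ∉ B) → Set.InjOn (insert a) (D : Set (Finset ℕ)) := by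
    intro a ha B hB B' hB' h
    have h' : (insert a B).erase a = (insert a B').erase a := by rw [h]
    rwa [Finset.erase_insert (ha B hB), Finset.erase_insert (ha B' hB')] at h'
  have hdisj : Disjoint (D.image fun B => insert (n + 1) B)
      (D.image fun B => insert (n + 2) B) := by
    rw [Finset.disjoint_left]
    rintro X hX hY
    simp only [Finset.mem_image] at hX hY
    obtain ⟨B, hB, rfl⟩ := hX
    obtain ⟨B', hB', hE⟩ := hY
    have hm : n + 2 ∈ insert (n + 1) B := by rw [← hE]; exact Finset.mem_insert_self _ _
    rcases Finset.mem_insert.1 hm with h | h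
    · omega
    · exact h2 B hB h
  have key : ∀ a, (∀ B ∈ D, a ∉ B) → ∀ S : Finset ℕ,
      ((D.image fun B => insert a B).filter (fun X => S ⊆ X)).card
        = (D.filter fun B => S.erase a ⊆ B).card := by
    intro a ha S
    rw [Finset.filter_image]
    rw [Finset.card_image_of_injOn ((hinj a ha).mono (Finset.coe_subset.2 (Finset.filter_subset _ _)))]
    congr 1
    apply Finset.filter_congr
    intro B hB
    simp [Finset.subset_insert_iff]
  refine ⟨⟨?_, ?_, ?_⟩, ?_⟩
  · obtain ⟨B, hB⟩ := hne
    exact ⟨insert (n + 1) B, Finset.mem_union_left _ (Finset.mem_image_of_mem _ hB)⟩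
  · intro X hX
    rcases Finset.mem_union.1 hX with hX | hX <;>
    · obtain ⟨B, hB, rfl⟩ := Finset.mem_image.1 hX
      constructor
      · intro x hx
        rcases Finset.mem_insert.1 hx with rfl | hx
        · simp only [Finset.mem_Icc]; omega
        · have := (hblocks B hB).1 hx
          simp only [Finset.mem_Icc] at this ⊢; omega
      · rw [Finset.card_insert_of_notMem (by first | exact h1 B hB | exact h2 B hB),
            (hblocks B hB).2]
  · intro S hS hScard
    rw [Finset.filter_union, Finset.card_union_of_disjoint
        (Finset.disjoint_filter_filter hdisj), key _ h1 S, key _ h2 S]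
    have hsub : ∀ a, a ∉ S → S.erase a ⊆ Finset.Icc 1 n → True := fun _ _ _ => trivial
    by_cases hc1 : n + 1 ∈ S <;> by_cases hc2 : n + 2 ∈ S
    · -- both: each count is 0
      have e1 : (D.filter fun B => S.erase (n + 1) ⊆ B) = ∅ := by
        apply Finset.filter_false_of_mem
        intro B hB hsub
        exact h2 B hB (hsub (Finset.mem_erase.2 ⟨by omega, hc2⟩))
      have e2 : (D.filter fun B => S.erase (n + 2) ⊆ B) = ∅ := by
        apply Finset.filter_false_of_mem
        intro B hB hsub
        exact h1 B hB (hsub (Finset.mem_erase.2 ⟨by omega, hc1⟩))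
      simp [e1, e2]
    · have e2 : (D.filter fun B => S.erase (n + 2) ⊆ B) = ∅ := by
        apply Finset.filter_false_of_mem
        intro B hB hsub
        exact h1 B hB (hsub (Finset.mem_erase.2 ⟨by omega, hc1⟩))
      rw [e2]
      simp only [Finset.card_empty, add_zero]
      apply heven
      · intro x hx
        obtain ⟨hx1, hx2⟩ := Finset.mem_erase.1 hx
        have := hS hx2
        simp only [Finset.mem_Icc] at this ⊢
        have : x ≠ n + 2 := fun h => hc2 (h ▸ hx2)
        omega
      · rw [Finset.card_erase_of_mem hc1, hScard]; omega
    · have e1 : (D.filter fun B => S.erase (n + 1) ⊆ B) = ∅ := by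
        apply Finset.filter_false_of_mem
        intro B hB hsub
        exact h2 B hB (hsub (Finset.mem_erase.2 ⟨by omega, hc2⟩))
      rw [e1]
      simp only [Finset.card_empty, zero_add]
      apply heven
      · intro x hx
        obtain ⟨hx1, hx2⟩ := Finset.mem_erase.1 hx
        have := hS hx2
        simp only [Finset.mem_Icc] at this ⊢
        have : x ≠ n + 1 := fun h => hc1 (h ▸ hx2)
        omega
      · rw [Finset.card_erase_of_mem hc2, hScard]; omega
    · rw [Finset.erase_eq_of_notMem hc1, Finset.erase_eq_of_notMem hc2]
      exact ⟨_, rfl⟩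
  · rw [Finset.card_union_of_disjoint hdisj,
        Finset.card_image_of_injOn (hinj _ h1), Finset.card_image_of_injOn (hinj _ h2)]
    ring
end

section
/- The minimum number of blocks of a binary t-(n,k)-design satisfies d_{t,n,k} ≥ d_{t-1,n-1,k-1} + 1, for t ≥ 1 and n > k ≥ t whenever binary t-(n,k)-designs exist. -/
/-!
Take a binary `t`-design `D` with the minimum number of blocks. A `t`-subset of one block lies
in an even and nonzero, hence at least two, number of blocks, so `D` has two distinct blocks of
the same size and some point `p` lies in one block but not in another. The derived design at
`p` (the blocks through `p`, with `p` deleted) is a binary `(t-1)`-design with block size `k-1`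
on the other `n-1` points, and it has fewer blocks than `D`; relabelling by the transposition
of `p` and `n` puts it on `{1,…,n-1}`.
-/

open Finset

def derivedDesign (p : ℕ) (D : Finset (Finset ℕ)) : Finset (Finset ℕ) :=
  (D.filter (p ∈ ·)).image (·.erase p)

lemma card_derivedDesign (p : ℕ) (D : Finset (Finset ℕ)) :
    #(derivedDesign p D) = #(D.filter (p ∈ ·)) :=
  card_image_of_injOn fun _ hA _ hB => erase_injOn' p (mem_filter.1 hA).2 (mem_filter.1 hB).2

lemma card_filter_subset_derivedDesign {p : ℕ} {S : Finset ℕ} (hpS : p ∉ S)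
    (D : Finset (Finset ℕ)) :
    #((derivedDesign p D).filter (S ⊆ ·)) = #(D.filter (insert p S ⊆ ·)) := by
  rw [derivedDesign, filter_image, card_image_of_injOn, filter_filter]
  · congr 1
    refine filter_congr fun B _ => ?_
    rw [insert_subset_iff, subset_erase, and_iff_left hpS, and_comm]
  · exact fun _ hA _ hB =>
      erase_injOn' p (mem_filter.1 (mem_filter.1 hA).1).2 (mem_filter.1 (mem_filter.1 hB).1).2

namespace IsBinaryDesignOn

variable {t k : ℕ} {N : Finset ℕ} {D : Finset (Finset ℕ)}

lemma one_lt_card (hD : IsBinaryDesignOn t N k D) (htk : t ≤ k) : 1 < #D := by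
  obtain ⟨⟨B, hB⟩, hblocks, heven⟩ := hD
  obtain ⟨hBN, hBk⟩ := hblocks B hB
  obtain ⟨S, hSB, hSt⟩ := exists_subset_card_eq (s := B) (n := t) (hBk ▸ htk)
  have hpos : 0 < #(D.filter (S ⊆ ·)) := card_pos.2 ⟨B, mem_filter.2 ⟨hB, hSB⟩⟩
  obtain ⟨c, hc⟩ := heven S (hSB.trans hBN) hSt
  calc 1 < #(D.filter (S ⊆ ·)) := by omega
    _ ≤ #D := card_filter_le _ _

lemma exists_mem_notMem (hD : IsBinaryDesignOn t N k D) (htk : t ≤ k) :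
    ∃ p, (∃ B ∈ D, p ∈ B) ∧ ∃ B ∈ D, p ∉ B := by
  obtain ⟨B, hB, B', hB', hne⟩ := one_lt_card_iff_nontrivial.1 (hD.one_lt_card htk)
  have hBB' : ¬B ⊆ B' := fun h =>
    hne (eq_of_subset_of_card_le h ((hD.2.1 B' hB').2.trans (hD.2.1 B hB).2.symm).le)
  obtain ⟨p, hpB, hpB'⟩ := not_subset.1 hBB'
  exact ⟨p, ⟨B, hB, hpB⟩, B', hB', hpB'⟩

lemma card_filter_subset_image_map (f : ℕ ↪ ℕ) (S : Finset ℕ) :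
    #((D.image (map f)).filter (S.map f ⊆ ·)) = #(D.filter (S ⊆ ·)) := by
  rw [filter_image, card_image_of_injective _ (map_injective f)]
  simp only [map_subset_map]

lemma image_map (hD : IsBinaryDesignOn t N k D) (f : ℕ ↪ ℕ) :
    IsBinaryDesignOn t (N.map f) k (D.image (map f)) := by
  obtain ⟨hne, hblocks, heven⟩ := hD
  refine ⟨hne.image _, ?_, ?_⟩
  · simp only [mem_image, forall_exists_index, and_imp]
    rintro _ B hB rfl
    exact ⟨map_subset_map.2 (hblocks B hB).1, (card_map f).trans (hblocks B hB).2⟩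
  · intro S hSN hSt
    obtain ⟨S, hS, rfl⟩ := subset_map_iff.1 hSN
    rw [card_filter_subset_image_map]
    exact heven S hS ((card_map f).symm.trans hSt)

lemma derivedDesign (hD : IsBinaryDesignOn t N k D) (ht : 1 ≤ t) {p : ℕ}
    (hp : ∃ B ∈ D, p ∈ B) :
    IsBinaryDesignOn (t - 1) (N.erase p) (k - 1) (derivedDesign p D) := by
  obtain ⟨hne, hblocks, heven⟩ := hD
  obtain ⟨B₀, hB₀, hpB₀⟩ := hp
  refine ⟨⟨B₀.erase p, mem_image_of_mem _ (mem_filter.2 ⟨hB₀, hpB₀⟩)⟩, ?_, ?_⟩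
  · simp only [_root_.derivedDesign, mem_image, mem_filter, forall_exists_index, and_imp]
    rintro _ B hB hpB rfl
    obtain ⟨hBN, hBk⟩ := hblocks B hB
    exact ⟨erase_subset_erase p hBN, by rw [card_erase_of_mem hpB, hBk]⟩
  · intro S hSN hSt
    have hpS : p ∉ S := fun h => (mem_erase.1 (hSN h)).1 rfl
    rw [card_filter_subset_derivedDesign hpS]
    refine heven _ (insert_subset ((hblocks B₀ hB₀).1 hpB₀) (hSN.trans (erase_subset p N))) ?_
    rw [card_insert_of_notMem hpS, hSt]
    omega

end IsBinaryDesignOn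

lemma IsBinaryDesign.exists_lt_card {t n k : ℕ} {D : Finset (Finset ℕ)}
    (hD : IsBinaryDesign t n k D) (ht : 1 ≤ t) (htk : t ≤ k) :
    ∃ D', IsBinaryDesign (t - 1) (n - 1) (k - 1) D' ∧ #D' < #D := by
  obtain ⟨p, ⟨B, hB, hpB⟩, B', hB', hpB'⟩ := hD.exists_mem_notMem htk
  have hpN : p ∈ Icc 1 n := (hD.2.1 B hB).1 hpB
  have hnN : n ∈ Icc 1 n := mem_Icc.2 ⟨(mem_Icc.1 hpN).1.trans (mem_Icc.1 hpN).2, le_rfl⟩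
  let σ := (Equiv.swap p n).toEmbedding
  have hrelabel : ((Icc 1 n).erase p).map σ = Icc 1 (n - 1) := by
    rw [map_erase, map_perm, Equiv.toEmbedding_apply, Equiv.swap_apply_left]
    · ext x; simp only [mem_erase, mem_Icc]; omega
    · intro x hx
      by_contra hxN
      exact hx (Equiv.swap_apply_of_ne_of_ne (fun h => hxN (h ▸ hpN)) (fun h => hxN (h ▸ hnN)))
  refine ⟨(derivedDesign p D).image (map σ), ?_, ?_⟩
  · unfold IsBinaryDesign
    rw [← hrelabel]
    exact (hD.derivedDesign ht ⟨B, hB, hpB⟩).image_map σ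
  · rw [card_image_of_injective _ (map_injective σ), card_derivedDesign]
    exact card_lt_card (filter_ssubset.2 ⟨B', hB', hpB'⟩)

theorem stmt6_general (t n k : ℕ) (ht : 1 ≤ t) (htk : t ≤ k)
    (hex : ∃ D : Finset (Finset ℕ), IsBinaryDesign t n k D) :
    minBlocks (t - 1) (n - 1) (k - 1) + 1 ≤ minBlocks t n k := by
  obtain ⟨D, hD⟩ := hex
  obtain ⟨D, hD, hDmin⟩ := Nat.sInf_mem (⟨#D, D, hD, rfl⟩ :
    {m | ∃ D : Finset (Finset ℕ), IsBinaryDesign t n k D ∧ #D = m}.Nonempty)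
  obtain ⟨D', hD', hlt⟩ := hD.exists_lt_card ht htk
  calc minBlocks (t - 1) (n - 1) (k - 1) + 1
      ≤ #D' + 1 := by gcongr; exact Nat.sInf_le ⟨D', hD', rfl⟩
    _ ≤ #D := hlt
    _ = minBlocks t n k := hDmin

theorem stmt6 (t n k : ℕ) (ht : 1 ≤ t) (htk : t ≤ k) (hkn : k < n)
    (hex : ∃ D : Finset (Finset ℕ), IsBinaryDesign t n k D) :
    minBlocks (t - 1) (n - 1) (k - 1) + 1 ≤ minBlocks t n k :=
  stmt6_general t n k ht htk hex
end

section
/- For n ≥ k + t + 1 (with k > t ≥ 1), the minimum number of blocks of a binary t-(n,k)-design satisfies t + 2 ≤ d_{t,n,k} ≤ 2^{t+1}. -/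
/-- Block of the small design: chosen odd points, complementary even points, plus a core. -/
def blkB (t k : ℕ) (E : Finset ℕ) : Finset ℕ :=
  E.image (fun j => 2*j+1) ∪ ((Finset.range (t+1)) \ E).image (fun j => 2*j+2) ∪
    Finset.Icc (2*t+3) (k+t+1)

lemma mem_blkB {t k : ℕ} {E : Finset ℕ} {s : ℕ} :
    s ∈ blkB t k E ↔ (∃ j ∈ E, 2*j+1 = s) ∨
      (∃ j, (j < t+1 ∧ j ∉ E) ∧ 2*j+2 = s) ∨ (2*t+3 ≤ s ∧ s ≤ k+t+1) := by
  simp [blkB, Finset.mem_union, Finset.mem_image, Finset.mem_sdiff, Finset.mem_range,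
    Finset.mem_Icc, or_assoc]

lemma card_blkB (t k : ℕ) (htk : t < k) (E : Finset ℕ) (hE : E ⊆ Finset.range (t+1)) :
    (blkB t k E).card = k := by
  have hd1 : Disjoint (E.image (fun j => 2*j+1)) (((Finset.range (t+1)) \ E).image (fun j => 2*j+2)) := by
    simp only [Finset.disjoint_left, Finset.mem_image]
    rintro a ⟨j, _, rfl⟩ ⟨j', _, h⟩; omega
  have hd2 : Disjoint (E.image (fun j => 2*j+1) ∪ ((Finset.range (t+1)) \ E).image (fun j => 2*j+2))
      (Finset.Icc (2*t+3) (k+t+1)) := by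
    simp only [Finset.disjoint_left, Finset.mem_union, Finset.mem_image, Finset.mem_Icc,
      Finset.mem_sdiff, Finset.mem_range]
    rintro a (⟨j, hj, rfl⟩ | ⟨j, hj, rfl⟩) h
    · have := Finset.mem_range.mp (hE hj); omega
    · omega
  have hc1 : (E.image (fun j => 2*j+1)).card = E.card :=
    Finset.card_image_of_injective _ (fun a b h => by omega)
  have hc2 : (((Finset.range (t+1)) \ E).image (fun j => 2*j+2)).card = t + 1 - E.card := by
    rw [Finset.card_image_of_injective _ (fun a b h => by omega), Finset.card_sdiff_of_subset hE,
      Finset.card_range]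
  have hEc : E.card ≤ t + 1 := by
    simpa [Finset.card_range] using Finset.card_le_card hE
  rw [blkB, Finset.card_union_of_disjoint hd2, Finset.card_union_of_disjoint hd1, hc1, hc2,
    Nat.card_Icc]
  omega

lemma blkB_subset {t n k : ℕ} (htk : t < k) (hn : k + t + 1 ≤ n) {E : Finset ℕ}
    (hE : E ⊆ Finset.range (t+1)) : blkB t k E ⊆ Finset.Icc 1 n := by
  intro s hs
  rw [Finset.mem_Icc]
  rcases mem_blkB.mp hs with ⟨j, hj, rfl⟩ | ⟨j, ⟨hj, _⟩, rfl⟩ | ⟨h1, h2⟩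
  · have := Finset.mem_range.mp (hE hj); omega
  · omega
  · omega

lemma blkB_injOn (t k : ℕ) : Set.InjOn (blkB t k) ↑(Finset.range (t+1)).powerset := by
  intro E1 hE1 E2 hE2 h
  simp only [Finset.coe_powerset, Set.mem_preimage, Set.mem_powerset_iff, Finset.coe_subset,
    Finset.mem_coe] at hE1 hE2
  replace hE1 : E1 ⊆ Finset.range (t+1) := by simpa using hE1
  replace hE2 : E2 ⊆ Finset.range (t+1) := by simpa using hE2
  have key : ∀ E E' : Finset ℕ, E ⊆ Finset.range (t+1) → blkB t k E = blkB t k E' →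
      ∀ j, j ∈ E → j ∈ E' := by
    intro E E' hE hEE' j hj
    have hjt : j < t + 1 := Finset.mem_range.mp (hE hj)
    have : (2*j+1 : ℕ) ∈ blkB t k E' := hEE' ▸ mem_blkB.mpr (Or.inl ⟨j, hj, rfl⟩)
    rcases mem_blkB.mp this with ⟨j', hj', h⟩ | ⟨j', _, h⟩ | ⟨h1, _⟩
    · have : j' = j := by omega
      exact this ▸ hj'
    · omega
    · omega
  exact Finset.ext fun j => ⟨key E1 E2 hE1 h j, key E2 E1 hE2 h.symm j⟩

lemma upper_design (t n k : ℕ) (htk : t < k) (hn : k + t + 1 ≤ n) :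
    ∃ D : Finset (Finset ℕ),
      (D.Nonempty ∧ (∀ B ∈ D, B ⊆ Finset.Icc 1 n ∧ B.card = k) ∧
        ∀ S ⊆ Finset.Icc 1 n, S.card = t → Even ((D.filter fun B => S ⊆ B).card)) ∧
      D.card = 2 ^ (t + 1) := by
  refine ⟨(Finset.range (t+1)).powerset.image (blkB t k), ⟨?_, ?_, ?_⟩, ?_⟩
  · exact ⟨blkB t k ∅, Finset.mem_image.mpr ⟨∅, by simp, rfl⟩⟩
  · intro B hB
    obtain ⟨E, hE, rfl⟩ := Finset.mem_image.mp hB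
    rw [Finset.mem_powerset] at hE
    exact ⟨blkB_subset htk hn hE, card_blkB t k htk E hE⟩
  · intro S hSN hSc
    -- find a free index j0
    have hfree : ∃ j0, j0 < t + 1 ∧ (2*j0+1) ∉ S ∧ (2*j0+2) ∉ S := by
      by_contra hcon
      push_neg at hcon
      have hmap : ∀ j ∈ Finset.range (t+1),
          (if 2*j+1 ∈ S then 2*j+1 else 2*j+2) ∈ S := by
        intro j hj
        have := hcon j (Finset.mem_range.mp hj)
        by_cases h : 2*j+1 ∈ S
        · simpa [h]
        · simpa [h] using this h
      have hinj : Set.InjOn (fun j => if 2*j+1 ∈ S then 2*j+1 else 2*j+2)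
          ↑(Finset.range (t+1)) := by
        intro j1 _ j2 _ h
        simp only at h
        by_cases h1 : 2*j1+1 ∈ S <;> by_cases h2 : 2*j2+1 ∈ S <;>
          simp [h1, h2] at h <;> omega
      have := Finset.card_le_card_of_injOn _ hmap hinj
      rw [Finset.card_range, hSc] at this
      omega
    obtain ⟨j0, hj0t, ha0, hb0⟩ := hfree
    -- reduce the filter over the image to a filter over the powerset
    rw [Finset.filter_image]
    rw [Finset.card_image_of_injOn ((blkB_injOn t k).mono (by
      intro E hE
      simp only [Finset.coe_filter, Set.mem_setOf_eq, Finset.mem_coe] at hE ⊢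
      exact hE.1))]
    set F := (Finset.range (t+1)).powerset.filter (fun E => S ⊆ blkB t k E) with hF
    have hsplit := Finset.card_filter_add_card_filter_not
      (s := F) (p := fun E => j0 ∈ E)
    have hbij : (F.filter (fun E => j0 ∉ E)).card = (F.filter (fun E => j0 ∈ E)).card := by
      refine Finset.card_bij' (fun E _ => insert j0 E) (fun E _ => E.erase j0) ?_ ?_ ?_ ?_
      · -- maps forward
        intro E hE
        simp only [hF, Finset.mem_filter, Finset.mem_powerset] at hE ⊢
        obtain ⟨⟨hEr, hES⟩, hj0E⟩ := hE
        refine ⟨⟨Finset.insert_subset (Finset.mem_range.mpr hj0t) hEr, ?_⟩,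
          Finset.mem_insert_self _ _⟩
        intro s hs
        rcases mem_blkB.mp (hES hs) with ⟨j, hj, rfl⟩ | ⟨j, ⟨hjt, hjE⟩, rfl⟩ | hcore
        · exact mem_blkB.mpr (Or.inl ⟨j, Finset.mem_insert_of_mem hj, rfl⟩)
        · have hne : j ≠ j0 := fun h => hb0 (h ▸ hs)
          exact mem_blkB.mpr (Or.inr (Or.inl ⟨j, ⟨hjt, by
            simp [Finset.mem_insert, hne, hjE]⟩, rfl⟩))
        · exact mem_blkB.mpr (Or.inr (Or.inr hcore))
      · -- maps backward
        intro E hE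
        simp only [hF, Finset.mem_filter, Finset.mem_powerset] at hE ⊢
        obtain ⟨⟨hEr, hES⟩, hj0E⟩ := hE
        refine ⟨⟨(Finset.erase_subset _ _).trans hEr, ?_⟩, Finset.notMem_erase _ _⟩
        intro s hs
        rcases mem_blkB.mp (hES hs) with ⟨j, hj, rfl⟩ | ⟨j, ⟨hjt, hjE⟩, rfl⟩ | hcore
        · have hne : j ≠ j0 := fun h => ha0 (h ▸ hs)
          exact mem_blkB.mpr (Or.inl ⟨j, Finset.mem_erase.mpr ⟨hne, hj⟩, rfl⟩)
        · exact mem_blkB.mpr (Or.inr (Or.inl ⟨j, ⟨hjt, fun h => hjE (Finset.erase_subset _ _ h)⟩, rfl⟩))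
        · exact mem_blkB.mpr (Or.inr (Or.inr hcore))
      · intro E hE
        simp only [hF, Finset.mem_filter] at hE
        exact Finset.erase_insert hE.2
      · intro E hE
        simp only [hF, Finset.mem_filter] at hE
        exact Finset.insert_erase hE.2
    exact ⟨(F.filter (fun E => j0 ∈ E)).card, by omega⟩
  · rw [Finset.card_image_of_injOn (blkB_injOn t k), Finset.card_powerset, Finset.card_range]

theorem lower_bound : ∀ t : ℕ, ∀ (N : Finset ℕ) (k : ℕ) (D : Finset (Finset ℕ)),
    t < k → IsBinaryDesignOn t N k D → t + 2 ≤ D.card := by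
  intro t
  induction t with
  | zero =>
    intro N k D _ ⟨hne, _, hev⟩
    have h0 := hev ∅ (Finset.empty_subset N) rfl
    rw [Finset.filter_true_of_mem (fun B _ => Finset.empty_subset B)] at h0
    obtain ⟨c, hc⟩ := h0
    have := Finset.card_pos.mpr hne
    omega
  | succ t ih =>
    intro N k D hk hD
    obtain ⟨hne, hblk, hev⟩ := hD
    obtain ⟨B1, hB1⟩ := hne
    obtain ⟨hB1N, hB1c⟩ := hblk B1 hB1
    -- get a (t+1)-subset S of B1
    obtain ⟨S, hSB1, hSc⟩ := Finset.exists_subset_card_eq (show t + 1 ≤ B1.card by omega)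
    have hSN : S ⊆ N := hSB1.trans hB1N
    have hEv := hev S hSN hSc
    have hB1f : B1 ∈ D.filter fun B => S ⊆ B := Finset.mem_filter.mpr ⟨hB1, hSB1⟩
    have h1 : 1 < (D.filter fun B => S ⊆ B).card := by
      rcases hEv with ⟨c, hc⟩
      have : 0 < (D.filter fun B => S ⊆ B).card := Finset.card_pos.mpr ⟨B1, hB1f⟩
      omega
    obtain ⟨B2, hB2f, hB2ne⟩ := Finset.exists_mem_ne h1 B1
    obtain ⟨hB2, _⟩ := Finset.mem_filter.mp hB2f
    have hB2c := (hblk B2 hB2).2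
    -- x ∈ B1 \ B2
    have hnotsub : ¬ B1 ⊆ B2 := fun h =>
      hB2ne (Finset.eq_of_subset_of_card_le h (by omega)).symm
    obtain ⟨x, hxB1, hxB2⟩ := Finset.not_subset.mp hnotsub
    have hxN : x ∈ N := hB1N hxB1
    -- derived design
    set D' := (D.filter fun B => x ∈ B).image (fun B => B.erase x) with hD'
    have hinj : Set.InjOn (fun B : Finset ℕ => B.erase x) ↑(D.filter fun B => x ∈ B) := by
      intro A hA B hB h
      have hxA : x ∈ A := (Finset.mem_filter.mp hA).2
      have hxB : x ∈ B := (Finset.mem_filter.mp hB).2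
      rw [← Finset.insert_erase hxA, ← Finset.insert_erase hxB]
      simp only at h
      rw [h]
    have hdes : IsBinaryDesignOn t (N.erase x) (k - 1) D' := by
      refine ⟨⟨B1.erase x, Finset.mem_image.mpr ⟨B1, Finset.mem_filter.mpr ⟨hB1, hxB1⟩, rfl⟩⟩, ?_, ?_⟩
      · intro B' hB'
        obtain ⟨B, hBf, rfl⟩ := Finset.mem_image.mp hB'
        obtain ⟨hBD, hxB⟩ := Finset.mem_filter.mp hBf
        obtain ⟨hBN, hBc⟩ := hblk B hBD
        exact ⟨Finset.erase_subset_erase x hBN, by rw [Finset.card_erase_of_mem hxB, hBc]⟩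
      · intro S' hS'N hS'c
        have hxS' : x ∉ S' := fun h => (Finset.mem_erase.mp (hS'N h)).1 rfl
        have hTN : insert x S' ⊆ N := Finset.insert_subset hxN (hS'N.trans (Finset.erase_subset x N))
        have hTc : (insert x S').card = t + 1 := by rw [Finset.card_insert_of_notMem hxS', hS'c]
        have hEvT := hev (insert x S') hTN hTc
        have hset : D'.filter (fun B => S' ⊆ B) =
            (D.filter fun B => insert x S' ⊆ B).image (fun B => B.erase x) := by
          ext C
          simp only [hD', Finset.mem_filter, Finset.mem_image]
          constructor
          · rintro ⟨⟨B, hBf, rfl⟩, hS'C⟩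
            obtain ⟨hBD, hxB⟩ := hBf
            exact ⟨B, ⟨hBD, Finset.insert_subset hxB
              (hS'C.trans (Finset.erase_subset x B))⟩, rfl⟩
          · rintro ⟨B, hBf, rfl⟩
            obtain ⟨hBD, hTB⟩ := hBf
            have hxB : x ∈ B := hTB (Finset.mem_insert_self x S')
            refine ⟨⟨B, ⟨hBD, hxB⟩, rfl⟩, ?_⟩
            intro s hs
            exact Finset.mem_erase.mpr ⟨fun h => hxS' (h ▸ hs), hTB (Finset.mem_insert_of_mem hs)⟩
        rw [hset, Finset.card_image_of_injOn (hinj.mono ?_)]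
        · exact hEvT
        · intro B hB
          obtain ⟨hBD, hTB⟩ := Finset.mem_filter.mp hB
          exact Finset.mem_filter.mpr ⟨hBD, hTB (Finset.mem_insert_self x S')⟩
    have hcard' : t + 2 ≤ D'.card := ih (N.erase x) (k - 1) D' (by omega) hdes
    have hcardeq : D'.card = (D.filter fun B => x ∈ B).card :=
      Finset.card_image_of_injOn hinj
    have hsub : (D.filter fun B => x ∈ B) ⊆ D.erase B2 := by
      intro B hB
      obtain ⟨hBD, hxB⟩ := Finset.mem_filter.mp hB
      exact Finset.mem_erase.mpr ⟨fun h => hxB2 (h ▸ hxB), hBD⟩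
    have := Finset.card_le_card hsub
    have := Finset.card_erase_of_mem hB2
    have := Finset.card_pos.mpr ⟨B2, hB2⟩
    omega

theorem stmt14 (t n k : ℕ) (ht : 1 ≤ t) (htk : t < k) (hn : k + t + 1 ≤ n) :
    t + 2 ≤ minBlocks t n k ∧ minBlocks t n k ≤ 2 ^ (t + 1) := by
  obtain ⟨D0, hdes0, hcard0⟩ := upper_design t n k htk hn
  have hmem : (2 ^ (t + 1)) ∈ {m | ∃ D : Finset (Finset ℕ), IsBinaryDesign t n k D ∧ D.card = m} :=
    ⟨D0, hdes0, hcard0⟩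
  constructor
  · have hsinf := Nat.sInf_mem (⟨_, hmem⟩ : Set.Nonempty _)
    obtain ⟨D, hD, hDcard⟩ := hsinf
    have := lower_bound t (Finset.Icc 1 n) k D htk hD
    rw [minBlocks, ← hDcard]
    exact this
  · exact Nat.sInf_le hmem
end

section
/- If k ≡ 0 (mod 4), k ≥ 4 and n ≥ k+2, then every binary 2-(n,k)-design has at least 7 blocks; and if moreover n ≥ 7k/4 + 2, then the minimum number of blocks of a binary 2-(n,k)-design is exactly 7. -/
/-!
Let `M` be the point-block incidence matrix over `𝔽₂` of a binary 2-design with `m` blocks of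
even size `k`. The design conditions say that `M Mᵀ = 0`: off the diagonal this is the pair
condition, and the diagonal follows because the row sums of `M Mᵀ` are `r_x k`. Hence the row
space `W` of `M` is totally isotropic and `2 rank M ≤ m`; the columns of `M` are `m` distinct
nonzero vectors of the column space, so `m < 2 ^ rank M`. For `m ≤ 6` this leaves only `m = 6`,
`rank M = 3` and `W = W^⊥`. As every point lies in an even number of blocks, the all-ones vector
is orthogonal to `W`, hence lies in `W`: some set of points meets every block in an odd number
of points. This confines the six columns to an affine hyperplane of the column space, which has
only `2 ^ 2` points.

Seven blocks are attained by the complements of the lines of the Fano plane, each point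
replaced by `k / 4` copies.
-/

open Finset Matrix

namespace Matrix

variable {K α ι : Type*} [Field K] [Fintype ι] (M : Matrix α ι K)

theorem col_mem_range_mulVecLin (j : ι) : M.col j ∈ LinearMap.range M.mulVecLin := by
  classical
  exact ⟨Pi.single j 1, mulVec_single_one M j⟩

variable [Fintype α]

theorem two_mul_rank_le_card_of_mul_transpose_eq_zero (hM : M * Mᵀ = 0) :
    2 * M.rank ≤ Fintype.card ι := by
  have := rank_add_rank_le_card_of_mul_eq_zero hM
  rw [rank_transpose] at this
  omega

theorem exists_vecMul_eq_of_mul_transpose_eq_zero (hM : M * Mᵀ = 0)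
    (hrank : 2 * M.rank = Fintype.card ι) {w : ι → K} (hw : M *ᵥ w = 0) :
    ∃ v, v ᵥ* M = w := by
  have hle : LinearMap.range Mᵀ.mulVecLin ≤ LinearMap.ker M.mulVecLin := by
    rintro _ ⟨v, rfl⟩
    rw [LinearMap.mem_ker, mulVecLin_apply, mulVecLin_apply, mulVec_mulVec, hM, zero_mulVec]
  have hdim := LinearMap.finrank_range_add_finrank_ker M.mulVecLin
  rw [Module.finrank_fintype_fun_eq_card] at hdim
  have hT : Module.finrank K (LinearMap.range Mᵀ.mulVecLin) = M.rank := rank_transpose M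
  have heq := Submodule.eq_of_le_of_finrank_le hle (by rw [hT]; unfold rank at *; omega)
  obtain ⟨v, hv⟩ : w ∈ LinearMap.range Mᵀ.mulVecLin := heq ▸ hw
  exact ⟨v, by rw [← hv, mulVecLin_apply, mulVec_transpose]⟩

variable [Fintype K]

theorem card_lt_card_pow_rank (hinj : Function.Injective M.col) (hne : ∀ j, M.col j ≠ 0) :
    Fintype.card ι < Fintype.card K ^ M.rank := by
  classical
  let c : ι → LinearMap.range M.mulVecLin := fun j => ⟨M.col j, M.col_mem_range_mulVecLin j⟩
  have hc : Function.Injective c := fun i j h => hinj (congrArg Subtype.val h)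
  have h0 : 0 ∉ Set.range c := fun ⟨j, hj⟩ => hne j (congrArg Subtype.val hj)
  rw [rank, ← Module.card_eq_pow_finrank]
  exact Fintype.card_lt_of_injective_of_notMem c hc h0

theorem card_le_card_pow_rank_sub_one (hinj : Function.Injective M.col) {v : α → K}
    (hv : v ᵥ* M = 1) : Fintype.card ι ≤ Fintype.card K ^ (M.rank - 1) := by
  classical
  rcases isEmpty_or_nonempty ι with hι | ⟨⟨j₀⟩⟩
  · simp
  let S := LinearMap.range M.mulVecLin
  -- the columns lie on the affine hyperplane `v ⬝ᵥ c = 1` of `S`, a translate of `H`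
  let H := S ⊓ LinearMap.ker (dotProductBilin K K v)
  have hdot (j : ι) : v ⬝ᵥ M.col j = 1 := congrFun hv j
  have hmem (j : ι) : M.col j - M.col j₀ ∈ H :=
    ⟨S.sub_mem (M.col_mem_range_mulVecLin j) (M.col_mem_range_mulVecLin j₀), by
      simp [dotProduct_sub, hdot]⟩
  have hlt : H < S := by
    refine lt_of_le_of_ne inf_le_left fun h => ?_
    have : M.col j₀ ∈ H := h ▸ M.col_mem_range_mulVecLin j₀
    simpa [hdot, H] using this.2
  have hH : Module.finrank K H < M.rank := Submodule.finrank_lt_finrank_of_lt hlt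
  have hc : Function.Injective fun j => (⟨_, hmem j⟩ : H) := fun i j h =>
    hinj (by simpa using congrArg Subtype.val h)
  calc Fintype.card ι ≤ Fintype.card H := Fintype.card_le_of_injective _ hc
    _ = Fintype.card K ^ Module.finrank K H := Module.card_eq_pow_finrank
    _ ≤ Fintype.card K ^ (M.rank - 1) := by
      gcongr
      · exact Fintype.card_pos
      · omega

end Matrix

theorem isBinaryDesignOn_two_iff {N : Finset ℕ} {k : ℕ} {D : Finset (Finset ℕ)} :
    IsBinaryDesignOn 2 N k D ↔ D.Nonempty ∧ (∀ B ∈ D, B ⊆ N ∧ #B = k) ∧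
      ∀ x ∈ N, ∀ y ∈ N, x ≠ y → Even #{B ∈ D | x ∈ B ∧ y ∈ B} := by
  have hpair (x y : ℕ) : {B ∈ D | {x, y} ⊆ B} = {B ∈ D | x ∈ B ∧ y ∈ B} := by
    simp only [insert_subset_iff, singleton_subset_iff]
  refine and_congr_right fun _ => and_congr_right fun _ => ⟨fun h x hx y hy hxy => ?_, ?_⟩
  · rw [← hpair]
    exact h {x, y} (insert_subset hx (singleton_subset_iff.2 hy)) (card_pair hxy)
  · rintro h S hS hcard
    obtain ⟨x, y, hxy, rfl⟩ := card_eq_two.1 hcard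
    rw [hpair]
    exact h x (hS (mem_insert_self x {y})) y (hS (by simp)) hxy

theorem IsBinaryDesignOn.mono {t k : ℕ} {N N' : Finset ℕ} {D : Finset (Finset ℕ)}
    (hD : IsBinaryDesignOn t N k D) (hN : N ⊆ N') : IsBinaryDesignOn t N' k D := by
  obtain ⟨hne, hblocks, heven⟩ := hD
  refine ⟨hne, fun B hB => ⟨(hblocks B hB).1.trans hN, (hblocks B hB).2⟩, fun S _ hS => ?_⟩
  by_cases hSN : S ⊆ N
  · exact heven S hSN hS
  · rw [filter_false_of_mem fun B hB hSB => hSN (hSB.trans (hblocks B hB).1)]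
    exact Even.zero

def incidenceMatrix (N : Finset ℕ) (D : Finset (Finset ℕ)) : Matrix N D (ZMod 2) :=
  Matrix.of fun x B => if (x : ℕ) ∈ (B : Finset ℕ) then 1 else 0

section incidenceMatrix

variable {N : Finset ℕ} {D : Finset (Finset ℕ)}

theorem incidenceMatrix_mul_transpose_apply (x y : N) :
    (incidenceMatrix N D * (incidenceMatrix N D)ᵀ) x y = #{B ∈ D | ↑x ∈ B ∧ ↑y ∈ B} := by
  simp only [incidenceMatrix, mul_apply, transpose_apply, of_apply, ite_zero_mul_ite_zero, mul_one]
  rw [sum_coe_sort D fun B => if (x : ℕ) ∈ B ∧ (y : ℕ) ∈ B then (1 : ZMod 2) else 0, sum_boole]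

theorem incidenceMatrix_mulVec_one_apply (x : N) :
    (incidenceMatrix N D *ᵥ 1) x = #{B ∈ D | ↑x ∈ B} := by
  simp only [incidenceMatrix, mulVec, dotProduct, of_apply, Pi.one_apply, mul_one]
  rw [sum_coe_sort D fun B => if (x : ℕ) ∈ B then (1 : ZMod 2) else 0, sum_boole]

theorem transpose_incidenceMatrix_mulVec_one_apply (B : D) (hB : (B : Finset ℕ) ⊆ N) :
    ((incidenceMatrix N D)ᵀ *ᵥ 1) B = #(B : Finset ℕ) := by
  simp only [incidenceMatrix, mulVec, dotProduct, transpose_apply, of_apply, Pi.one_apply, mul_one]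
  rw [sum_coe_sort N fun x => if x ∈ (B : Finset ℕ) then (1 : ZMod 2) else 0, sum_boole,
    filter_mem_eq_inter, inter_eq_right.2 hB]

theorem incidenceMatrix_col_injective (hD : ∀ B ∈ D, B ⊆ N) :
    Function.Injective (incidenceMatrix N D).col := by
  intro B B' h
  have hmem {C C' : D} (hC : (incidenceMatrix N D).col C = (incidenceMatrix N D).col C') {t : ℕ}
      (ht : t ∈ (C : Finset ℕ)) : t ∈ (C' : Finset ℕ) := by
    have := congrFun hC ⟨t, hD C C.2 ht⟩
    by_contra h
    simp [incidenceMatrix, ht, h] at this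
  exact Subtype.ext (Finset.ext fun t => ⟨hmem h, hmem h.symm⟩)

theorem incidenceMatrix_col_ne_zero {B : D} (hB : (B : Finset ℕ) ⊆ N)
    (hne : (B : Finset ℕ).Nonempty) : (incidenceMatrix N D).col B ≠ 0 := by
  obtain ⟨t, ht⟩ := hne
  intro h
  simpa [incidenceMatrix, ht] using congrFun h ⟨t, hB ht⟩

end incidenceMatrix

namespace IsBinaryDesignOn

variable {N : Finset ℕ} {D : Finset (Finset ℕ)} {k : ℕ}

theorem incidenceMatrix_mul_transpose_eq_zero (hD : IsBinaryDesignOn 2 N k D) (hk : Even k) :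
    incidenceMatrix N D * (incidenceMatrix N D)ᵀ = 0 := by
  set M := incidenceMatrix N D
  obtain ⟨-, hblocks, hpair⟩ := isBinaryDesignOn_two_iff.1 hD
  have hoff {x y : N} (hxy : x ≠ y) : (M * Mᵀ) x y = 0 := by
    rw [incidenceMatrix_mul_transpose_apply, ZMod.natCast_eq_zero_iff_even]
    exact hpair x x.2 y y.2 (Subtype.coe_injective.ne hxy)
  have hsizes : Mᵀ *ᵥ 1 = 0 := funext fun B => by
    rw [transpose_incidenceMatrix_mulVec_one_apply B (hblocks B B.2).1, (hblocks B B.2).2]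
    exact hk.natCast_zmod_two
  have hdiag (x : N) : (M * Mᵀ) x x = 0 := by
    have : ((M * Mᵀ) *ᵥ 1) x = 0 := by rw [← mulVec_mulVec, hsizes, mulVec_zero, Pi.zero_apply]
    rwa [mulVec, dotProduct, sum_eq_single x (fun y _ hyx => by simp [hoff hyx.symm]) (by simp),
      Pi.one_apply, mul_one] at this
  ext x y
  obtain rfl | hxy := eq_or_ne x y
  exacts [hdiag x, hoff hxy]

theorem even_card_filter_mem (hD : IsBinaryDesignOn 2 N k D) (hk : Even k) {x : ℕ}
    (hx : x ∈ N) : Even #{B ∈ D | x ∈ B} := by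
  have := congrFun (congrFun (hD.incidenceMatrix_mul_transpose_eq_zero hk) ⟨x, hx⟩) ⟨x, hx⟩
  rw [incidenceMatrix_mul_transpose_apply, Matrix.zero_apply, ZMod.natCast_eq_zero_iff_even] at this
  simpa only [and_self] using this

theorem incidenceMatrix_mulVec_one (hD : IsBinaryDesignOn 2 N k D) (hk : Even k) :
    incidenceMatrix N D *ᵥ 1 = 0 := funext fun x => by
  rw [incidenceMatrix_mulVec_one_apply, Pi.zero_apply, ZMod.natCast_eq_zero_iff_even]
  exact hD.even_card_filter_mem hk x.2

theorem seven_le_card (hD : IsBinaryDesignOn 2 N k D) (hk : Even k) (hk0 : k ≠ 0) : 7 ≤ #D := by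
  set M := incidenceMatrix N D
  obtain ⟨hne, hblocks, -⟩ := id hD
  have hMM := hD.incidenceMatrix_mul_transpose_eq_zero hk
  have hinj := incidenceMatrix_col_injective fun B hB => (hblocks B hB).1
  have hrank := M.two_mul_rank_le_card_of_mul_transpose_eq_zero hMM
  have hlt := M.card_lt_card_pow_rank hinj fun B => incidenceMatrix_col_ne_zero
    (hblocks B B.2).1 (card_pos.1 (by rw [(hblocks B B.2).2]; omega))
  have hhalf : 2 * M.rank < Fintype.card D ∨ Fintype.card D ≤ 2 ^ (M.rank - 1) := by
    refine hrank.lt_or_eq.imp_right fun h => ?_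
    obtain ⟨v, hv⟩ :=
      M.exists_vecMul_eq_of_mul_transpose_eq_zero hMM h (hD.incidenceMatrix_mulVec_one hk)
    simpa using M.card_le_card_pow_rank_sub_one hinj hv
  rw [ZMod.card] at hlt
  rw [Fintype.card_coe] at hrank hlt hhalf
  have hpos : 0 < #D := hne.card_pos
  by_contra! h7
  have : M.rank ≤ 3 := by omega
  interval_cases M.rank <;> simp only [Nat.reducePow, Nat.reduceSub] at hlt hhalf <;> omega

end IsBinaryDesignOn

def pullbackDesign (N' : Finset ℕ) (f : ℕ → ℕ) (D : Finset (Finset ℕ)) : Finset (Finset ℕ) :=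
  D.image fun B => {x ∈ N' | f x ∈ B}

section pullbackDesign

variable {N N' : Finset ℕ} {f : ℕ → ℕ} {D : Finset (Finset ℕ)}

theorem surjOn_of_card_filter_eq {q : ℕ} (hfib : ∀ t ∈ N, #{x ∈ N' | f x = t} = q)
    (hq : q ≠ 0) : Set.SurjOn f N' N := by
  intro t ht
  obtain ⟨x, hx⟩ := card_pos.1 (Nat.pos_of_ne_zero (hfib t ht ▸ hq))
  exact ⟨x, (mem_filter.1 hx).1, (mem_filter.1 hx).2⟩

theorem injOn_filter_mem (hf : Set.SurjOn f N' N) :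
    Set.InjOn (fun B : Finset ℕ => {x ∈ N' | f x ∈ B}) {B | B ⊆ N} := by
  intro B hB B' hB' h
  ext t
  by_cases ht : t ∈ N
  · obtain ⟨x, hx, rfl⟩ := hf ht
    simpa [mem_coe.1 hx] using congrArg (x ∈ ·) h
  · exact iff_of_false (fun h => ht (hB h)) (fun h => ht (hB' h))

theorem card_pullbackDesign (hD : ∀ B ∈ D, B ⊆ N) (hf : Set.SurjOn f N' N) :
    #(pullbackDesign N' f D) = #D :=
  card_image_of_injOn ((injOn_filter_mem hf).mono hD)

theorem card_filter_mem_eq {q : ℕ} {B : Finset ℕ} (hB : B ⊆ N)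
    (hfib : ∀ t ∈ N, #{x ∈ N' | f x = t} = q) : #{x ∈ N' | f x ∈ B} = q * #B := by
  rw [card_eq_sum_card_fiberwise (s := {x ∈ N' | f x ∈ B}) (t := B) fun x hx => (mem_filter.1 hx).2,
    sum_congr rfl fun t ht => ?_, sum_const, smul_eq_mul, mul_comm]
  rw [filter_filter, ← hfib t (hB ht)]
  exact congrArg card (filter_congr fun x _ => ⟨And.right, fun h => ⟨h ▸ ht, h⟩⟩)

theorem IsBinaryDesignOn.pullback {k q : ℕ} (hD : IsBinaryDesignOn 2 N k D)
    (hdeg : ∀ t ∈ N, Even #{B ∈ D | t ∈ B}) (hf : Set.MapsTo f N' N)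
    (hfib : ∀ t ∈ N, #{x ∈ N' | f x = t} = q) (hq : q ≠ 0) :
    IsBinaryDesignOn 2 N' (q * k) (pullbackDesign N' f D) := by
  obtain ⟨hne, hblocks, hpair⟩ := isBinaryDesignOn_two_iff.1 hD
  refine isBinaryDesignOn_two_iff.2 ⟨hne.image _, ?_, fun x hx y hy hxy => ?_⟩
  · simp only [pullbackDesign, mem_image, forall_exists_index, and_imp, forall_apply_eq_imp_iff₂]
    exact fun B hB => ⟨filter_subset _ _, by
      rw [card_filter_mem_eq (hblocks B hB).1 hfib, (hblocks B hB).2]⟩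
  · have hcount : #{B' ∈ pullbackDesign N' f D | x ∈ B' ∧ y ∈ B'} =
        #{B ∈ D | f x ∈ B ∧ f y ∈ B} := by
      rw [pullbackDesign, filter_image, card_image_of_injOn ((injOn_filter_mem
        (surjOn_of_card_filter_eq hfib hq)).mono fun B hB => (hblocks B (mem_filter.1 hB).1).1)]
      congr 1
      exact filter_congr fun B _ => by simp [hx, hy]
    rw [hcount]
    obtain hfxy | hfxy := eq_or_ne (f x) (f y)
    · simpa only [hfxy, and_self] using hdeg (f y) (hf hy)
    · exact hpair (f x) (hf hx) (f y) (hf hy) hfxy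

end pullbackDesign

theorem div_add_one_mem_Icc {q n x : ℕ} (hq : q ≠ 0) (hx : x ∈ Icc 1 (q * n)) :
    (x - 1) / q + 1 ∈ Icc 1 n := by
  rw [mem_Icc] at hx ⊢
  refine ⟨Nat.le_add_left 1 _,
    Nat.succ_le_of_lt ((Nat.div_lt_iff_lt_mul (Nat.pos_of_ne_zero hq)).2 ?_)⟩
  rw [mul_comm]
  omega

theorem card_filter_div_add_one_eq {q n t : ℕ} (hq : q ≠ 0) (ht : t ∈ Icc 1 n) :
    #{x ∈ Icc 1 (q * n) | (x - 1) / q + 1 = t} = q := by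
  obtain ⟨s, rfl⟩ : ∃ s, t = s + 1 := ⟨t - 1, by rw [mem_Icc] at ht; omega⟩
  have hle : q * s + q ≤ q * n := by
    simpa [mul_add] using Nat.mul_le_mul_left q (mem_Icc.1 ht).2
  have hfib : {x ∈ Icc 1 (q * n) | (x - 1) / q + 1 = s + 1} = Icc (q * s + 1) (q * s + q) := by
    ext x
    simp only [mem_filter, mem_Icc, Nat.add_right_cancel_iff,
      Nat.div_eq_iff (Nat.pos_of_ne_zero hq), mul_comm s q]
    omega
  rw [hfib, Nat.card_Icc]
  omega

/-- The complements `{x | a · x = 1}` of the lines of the Fano plane, reading the points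
`1, …, 7` as the nonzero vectors of `𝔽₂³` in binary. -/
def fanoComplements : Finset (Finset ℕ) :=
  {{4, 5, 6, 7}, {2, 3, 6, 7}, {2, 3, 4, 5}, {1, 3, 5, 7}, {1, 3, 4, 6}, {1, 2, 5, 6}, {1, 2, 4, 7}}

theorem isBinaryDesignOn_fanoComplements : IsBinaryDesignOn 2 (Icc 1 7) 4 fanoComplements :=
  isBinaryDesignOn_two_iff.2 (by decide)

theorem card_fanoComplements : #fanoComplements = 7 := by decide

theorem exists_isBinaryDesign_card_eq_seven {n q : ℕ} (hq : q ≠ 0) (hn : 7 * q ≤ n) :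
    ∃ D, IsBinaryDesign 2 n (q * 4) D ∧ #D = 7 := by
  have hfano := isBinaryDesignOn_fanoComplements
  have hfib (t : ℕ) (ht : t ∈ Icc 1 7) := card_filter_div_add_one_eq (q := q) hq ht
  refine ⟨pullbackDesign (Icc 1 (q * 7)) (fun x => (x - 1) / q + 1) fanoComplements, ?_, ?_⟩
  · exact (hfano.pullback (fun t => hfano.even_card_filter_mem (by decide))
      (fun x => div_add_one_mem_Icc hq) hfib hq).mono (Icc_subset_Icc_right (by omega))
  · rw [card_pullbackDesign (fun B hB => (hfano.2.1 B hB).1) (surjOn_of_card_filter_eq hfib hq),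
      card_fanoComplements]

theorem stmt17_general (n k : ℕ) (hk : k % 4 = 0) (hk4 : 4 ≤ k) :
    (∀ D : Finset (Finset ℕ), IsBinaryDesign 2 n k D → 7 ≤ D.card) ∧
      (7 * k / 4 + 2 ≤ n → minBlocks 2 n k = 7) := by
  have hlower (D : Finset (Finset ℕ)) (hD : IsBinaryDesign 2 n k D) : 7 ≤ #D :=
    IsBinaryDesignOn.seven_le_card hD (Nat.even_iff.2 (by omega)) (by omega)
  refine ⟨hlower, fun hn => ?_⟩
  obtain ⟨D, hD, hcard⟩ := exists_isBinaryDesign_card_eq_seven (n := n) (q := k / 4)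
    (by omega) (by omega)
  rw [Nat.div_mul_cancel (Nat.dvd_of_mod_eq_zero hk)] at hD
  exact le_antisymm (Nat.sInf_le ⟨D, hD, hcard⟩)
    (le_csInf ⟨7, D, hD, hcard⟩ fun m ⟨D', hD', hm⟩ => hm ▸ hlower D' hD')

theorem stmt17 (n k : ℕ) (hk : k % 4 = 0) (hk4 : 4 ≤ k) (hn : k + 2 ≤ n) :
    (∀ D : Finset (Finset ℕ), IsBinaryDesign 2 n k D → 7 ≤ D.card) ∧
      (7 * k / 4 + 2 ≤ n → minBlocks 2 n k = 7) :=
  stmt17_general n k hk hk4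
end
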